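/- arXiv:2311.09842 — 2 statements merged into one kernel-verified Lean document; each statement's English description precedes it below -/
import Mathlib

section
/- Fix s ∈ ℝ, let k be the Stieltjes–Volterra kernel of type B^∞ on [s, s+τ_N]×[s, s+τ_N] defined by k(t,τ) := Σ_{j=1}^N D_j(t) 𝔥(τ − t + τ_j) − Σ_{j=1}^N D_j(t) for τ ∈ [s,t] and k(t,τ) := 0 for τ > t (𝔥 the left-continuous Heaviside function with 𝔥(τ)=0 for τ ≤ 0), and let ρ be its resolvent. Then for all (t,α) ∈ [s, s+τ_N) × [s, s+τ_N) one has H(t−α) I_d + ρ(t,α) = X(t,α), where H is the right-continuous Heaviside function (H(τ) = 0 for τ < 0, H(τ) = 1 for τ ≥ 0) and X is the fundamental solution. -/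
open MeasureTheory Set
open scoped ENNReal NNReal
open scoped Matrix.Norms.L2Operator

noncomputable section

-- The Lebesgue–Stieltjes measure of a monotone function (zero if not monotone).
open scoped Classical in
noncomputable def monoMeasure (m : ℝ → ℝ) : Measure ℝ :=
  if h : Monotone m then h.stieltjesFunction.measure else 0

/-- The function `f` clamped to the interval `[c,e]`. -/
def clampOn (f : ℝ → ℝ) (c e : ℝ) : ℝ → ℝ := fun x => f (max c (min x e))

/-- Cumulative total variation of the clamped function. -/
def varFun (f : ℝ → ℝ) (c e : ℝ) : ℝ → ℝ :=
  fun x => (eVariationOn (clampOn f c e) (Icc c x)).toReal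

/-- Positive (Jordan) part. -/
def posPartFun (f : ℝ → ℝ) (c e : ℝ) : ℝ → ℝ :=
  fun x => (varFun f c e x + clampOn f c e x - f c) / 2

/-- Negative (Jordan) part. -/
def negPartFun (f : ℝ → ℝ) (c e : ℝ) : ℝ → ℝ :=
  fun x => (varFun f c e x - clampOn f c e x + f c) / 2

/-- Lebesgue–Stieltjes integral of `φ` against (the measure associated with the
restriction to `[c,e)` of) the function `f`, over `[c,e)`. -/
def lsIntIcoR (f : ℝ → ℝ) (c e : ℝ) (φ : ℝ → ℝ) : ℝ :=
  (∫ x in Ico c e, φ x ∂(monoMeasure (posPartFun f c e))) -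
  (∫ x in Ico c e, φ x ∂(monoMeasure (negPartFun f c e)))

/-- Same, over the open interval `(c,e)`. -/
def lsIntIooR (f : ℝ → ℝ) (c e : ℝ) (φ : ℝ → ℝ) : ℝ :=
  (∫ x in Ioo c e, φ x ∂(monoMeasure (posPartFun f c e))) -
  (∫ x in Ioo c e, φ x ∂(monoMeasure (negPartFun f c e)))

/-- Complex Lebesgue–Stieltjes integral `∫_{[c,e)} φ df`. -/
def lsIntIcoC (f : ℝ → ℂ) (c e : ℝ) (φ : ℝ → ℂ) : ℂ :=
  (lsIntIcoR (fun x => (f x).re) c e (fun x => (φ x).re)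
    - lsIntIcoR (fun x => (f x).im) c e (fun x => (φ x).im))
  + Complex.I * (lsIntIcoR (fun x => (f x).re) c e (fun x => (φ x).im)
    + lsIntIcoR (fun x => (f x).im) c e (fun x => (φ x).re))

def lsIntIooC (f : ℝ → ℂ) (c e : ℝ) (φ : ℝ → ℂ) : ℂ :=
  (lsIntIooR (fun x => (f x).re) c e (fun x => (φ x).re)
    - lsIntIooR (fun x => (f x).im) c e (fun x => (φ x).im))
  + Complex.I * (lsIntIooR (fun x => (f x).re) c e (fun x => (φ x).im)
    + lsIntIooR (fun x => (f x).im) c e (fun x => (φ x).re))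

/-- `∫_{[c,e)} dF(τ) G(τ)` for matrix-valued `F` (the integrator) and `G`. -/
def lsIntIcoMM {d : ℕ} (F : ℝ → Matrix (Fin d) (Fin d) ℂ) (c e : ℝ)
    (G : ℝ → Matrix (Fin d) (Fin d) ℂ) : Matrix (Fin d) (Fin d) ℂ :=
  Matrix.of fun i k => ∑ j, lsIntIcoC (fun τ => F τ i j) c e (fun τ => G τ j k)

/-- `∫_{[c,e)} dF(τ) g(τ)` for matrix-valued `F` and vector-valued `g`. -/
def lsIntIcoMV {d : ℕ} (F : ℝ → Matrix (Fin d) (Fin d) ℂ) (c e : ℝ)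
    (g : ℝ → Fin d → ℂ) : Fin d → ℂ :=
  fun i => ∑ j, lsIntIcoC (fun τ => F τ i j) c e (fun τ => g τ j)

def lsIntIooMV {d : ℕ} (F : ℝ → Matrix (Fin d) (Fin d) ℂ) (c e : ℝ)
    (g : ℝ → Fin d → ℂ) : Fin d → ℂ :=
  fun i => ∑ j, lsIntIooC (fun τ => F τ i j) c e (fun τ => g τ j)

instance matrixMeasurableSpace {d : ℕ} : MeasurableSpace (Matrix (Fin d) (Fin d) ℂ) :=
  inferInstanceAs (MeasurableSpace (Fin d → Fin d → ℂ))

/-- A Stieltjes–Volterra kernel of type `B^∞` on `[a,b] × [a,b]`. -/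
def IsSVKernel (d : ℕ) (a b : ℝ) (κ : ℝ → ℝ → Matrix (Fin d) (Fin d) ℂ) : Prop :=
  Measurable ((Icc a b ×ˢ Icc a b).restrict (fun p : ℝ × ℝ => κ p.1 p.2)) ∧
  (∀ t ∈ Icc a b, ∀ τ ∈ Icc a b, t ≤ τ → κ t τ = 0) ∧
  (∀ t ∈ Icc a b, ∀ x ∈ Icc a b, ContinuousWithinAt (κ t) (Icc a b ∩ Iio x) x) ∧
  (∃ C : ℝ, ∀ t ∈ Icc a b, eVariationOn (κ t) (Icc a b) ≤ ENNReal.ofReal C) ∧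
  (∀ ε > (0:ℝ), ∃ η > (0:ℝ), ∀ t ∈ Icc a b, ∀ τ ∈ Icc a b, 0 < t - τ → t - τ < η →
      eVariationOn (κ t) (Ico τ t) < ENNReal.ofReal ε)

/-- The norm `‖κ‖_{[a,b]} = sup_t ‖κ(t,·)‖_{BV([a,b])}` (base point `b`). -/
def KNorm (d : ℕ) (a b : ℝ) (κ : ℝ → ℝ → Matrix (Fin d) (Fin d) ℂ) : ℝ≥0∞ :=
  ⨆ t ∈ Icc a b, eVariationOn (κ t) (Icc a b)

/-- `ρ` is a resolvent of the kernel `κ`. -/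
def IsResolvent (d : ℕ) (a b : ℝ) (κ ρ : ℝ → ℝ → Matrix (Fin d) (Fin d) ℂ) : Prop :=
  IsSVKernel d a b ρ ∧
  ∀ t ∈ Icc a b, ∀ β ∈ Icc a b,
    ρ t β = -κ t β + lsIntIcoMM (κ t) β t (fun τ => ρ τ β)

/-- The left-continuous Heaviside function: `𝔥 x = 0` for `x ≤ 0` and `1` for `x > 0`. -/
noncomputable def lcHeaviside (x : ℝ) : ℝ := if 0 < x then 1 else 0

/-!
For fixed `t`, the kernel `k(t,·)` is a left-continuous step function with a jump of `D_j(t)` at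
each `t - τ_j`. Its Jordan decomposition is explicit, so the Lebesgue–Stieltjes integral against it
is a finite sum of point evaluations, and the resolvent equation becomes the delay recursion
`ρ(t,α) = ∑_{α ≤ t - τ_j} D_j(t) (1 + ρ(t - τ_j, α))`. Thus `1 + ρ(·,α)` and `X(·,α)` satisfy the
same recursion on `[α, s + τ_N)`, and such a recursion has at most one solution, by induction on
the number of multiples of the smallest delay that fit into `t - α`.
-/

open Filter Topology Function

lemma lcHeaviside_of_nonpos {x : ℝ} (h : x ≤ 0) : lcHeaviside x = 0 := if_neg h.not_gt

lemma lcHeaviside_of_pos {x : ℝ} (h : 0 < x) : lcHeaviside x = 1 := if_pos h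

lemma lcHeaviside_sub (x a : ℝ) : lcHeaviside (x - a) = if a < x then 1 else 0 := by
  simp only [lcHeaviside, sub_pos]

lemma eVariationOn_add_const {α E : Type*} [LinearOrder α] [SeminormedAddCommGroup E]
    (f : α → E) (C : E) (s : Set α) :
    eVariationOn (fun x => f x + C) s = eVariationOn f s := by
  simp only [eVariationOn, edist_add_right]

lemma eVariationOn_mul_lcHeaviside_sub (w : ℝ) {u v : ℝ} (huv : u < v) :
    eVariationOn (fun y => w * lcHeaviside (y - u)) (Icc u v) = ENNReal.ofReal |w| := by
  have hIoc : Icc u v ∩ Ioi u = Ioc u v := by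
    ext; simp only [mem_inter_iff, mem_Icc, mem_Ioi, mem_Ioc]; grind
  have hconst : EqOn (fun y => w * lcHeaviside (y - u)) (fun _ => w) (Ioc u v) := fun y hy => by
    simp [lcHeaviside_of_pos (sub_pos.2 hy.1)]
  have hlim : Tendsto (fun y => w * lcHeaviside (y - u)) (𝓝[Icc u v ∩ Ioi u] u) (𝓝 w) := by
    rw [hIoc]
    exact tendsto_const_nhds.congr' (eventually_nhdsWithin_of_forall fun y hy => (hconst hy).symm)
  have := eVariationOn.eVariationOn_on_inter_Ici_eq_Ioi_add_edist
    (by rw [hIoc]; exact left_nhdsWithin_Ioc_neBot huv) (Set.left_mem_Icc.2 huv.le) hlim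
  rw [inter_eq_left.2 Icc_subset_Ici_self] at this
  rw [this, hIoc, eVariationOn.congr hconst,
    eVariationOn.constant_on
    (subsingleton_singleton.anti (image_subset_iff.2 fun _ _ => rfl)), zero_add, sub_self,
    lcHeaviside_of_nonpos le_rfl, mul_zero,
    edist_dist, Real.dist_eq, zero_sub, abs_neg]

section JumpFun

variable {ι : Type*} (s : Finset ι) (a w : ι → ℝ)

def jumpFun (x : ℝ) : ℝ := ∑ j ∈ s, w j * lcHeaviside (x - a j)

lemma jumpFun_eq_sum_filter (x : ℝ) : jumpFun s a w x = ∑ j ∈ s with a j < x, w j := by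
  simp only [jumpFun, lcHeaviside_sub, mul_ite, mul_one, mul_zero, Finset.sum_filter]

variable {s a}

lemma eqOn_jumpFun_filter_lt (x : ℝ) :
    EqOn (jumpFun s a w) (jumpFun (s.filter (a · < x)) a w) (Iic x) := fun y hy => by
  simp only [jumpFun_eq_sum_filter, Finset.filter_filter]
  exact Finset.sum_congr (Finset.filter_congr fun j _ => by grind) fun _ _ => rfl

lemma eVariationOn_jumpFun {c x : ℝ} (hmem : ∀ j ∈ s, a j ∈ Ico c x) (hinj : InjOn a s) :
    eVariationOn (jumpFun s a w) (Icc c x) = ENNReal.ofReal (∑ j ∈ s, |w j|) := by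
  classical
  induction s using Finset.strongInduction generalizing x with
  | H s ih =>
    rcases s.eq_empty_or_nonempty with rfl | hne
    · rw [Finset.sum_empty, ENNReal.ofReal_zero]
      exact eVariationOn.constant_on
        (subsingleton_singleton.anti (image_subset_iff.2 fun _ _ => Finset.sum_empty (M := ℝ)))
    obtain ⟨j₀, hj₀, hmax⟩ := s.exists_max_image a hne
    have hlt : ∀ j ∈ s.erase j₀, a j < a j₀ := fun j hj =>
      (hmax j (Finset.mem_of_mem_erase hj)).lt_of_ne fun h =>
        Finset.ne_of_mem_erase hj (hinj (Finset.mem_of_mem_erase hj) hj₀ h)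
    have hleft : EqOn (jumpFun s a w) (jumpFun (s.erase j₀) a w) (Icc c (a j₀)) := fun y hy => by
      simp only [jumpFun, ← Finset.add_sum_erase s _ hj₀,
        lcHeaviside_of_nonpos (sub_nonpos.2 hy.2), mul_zero, zero_add]
    have hright : EqOn (jumpFun s a w)
        (fun y => w j₀ * lcHeaviside (y - a j₀) + ∑ j ∈ s.erase j₀, w j) (Icc (a j₀) x) :=
      fun y hy => by
        simp only [jumpFun, ← Finset.add_sum_erase s _ hj₀]
        congr 1
        exact Finset.sum_congr rfl fun j hj => by
          rw [lcHeaviside_of_pos (by linarith [hlt j hj, hy.1]), mul_one]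
    obtain ⟨hc, hx⟩ := hmem j₀ hj₀
    rw [← univ_inter (Icc c x), ← eVariationOn.Icc_add_Icc _ hc hx.le (mem_univ _), univ_inter,
      univ_inter, eVariationOn.congr hleft, eVariationOn.congr hright, eVariationOn_add_const,
      eVariationOn_mul_lcHeaviside_sub _ hx,
      ih _ (Finset.erase_ssubset hj₀)
        (fun j hj => ⟨(hmem j (Finset.mem_of_mem_erase hj)).1, hlt j hj⟩)
        (hinj.mono (Finset.erase_subset _ _)),
      ← ENNReal.ofReal_add (Finset.sum_nonneg fun _ _ => abs_nonneg _) (abs_nonneg _),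
      Finset.sum_erase_add _ _ hj₀]

end JumpFun

section JumpFunJordan

variable {ι : Type*} {s : Finset ι} {a : ι → ℝ} (w : ι → ℝ) (C c e : ℝ)

lemma clampOn_jumpFun_add_const :
    clampOn (fun x => jumpFun s a w x + C) c e
      = fun x => jumpFun (s.filter fun j => c ≤ a j ∧ a j < e) a w x
          + (∑ j ∈ s with a j < c, w j + C) := by
  funext x
  simp only [clampOn, jumpFun_eq_sum_filter, Finset.filter_filter, ← add_assoc]
  congr 1
  rw [Finset.sum_filter, Finset.sum_filter, Finset.sum_filter, ← Finset.sum_add_distrib]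
  refine Finset.sum_congr rfl fun j _ => ?_
  simp only [lt_max_iff, lt_min_iff]
  split_ifs <;> grind

lemma varFun_jumpFun_add_const (hinj : InjOn a s) :
    varFun (fun x => jumpFun s a w x + C) c e
      = jumpFun (s.filter fun j => c ≤ a j ∧ a j < e) a (|w ·|) := by
  funext x
  rw [varFun, clampOn_jumpFun_add_const, eVariationOn_add_const]
  rcases lt_or_ge x c with hxc | hcx
  · rw [Icc_eq_empty hxc.not_ge, eVariationOn.subsingleton _ subsingleton_empty,
      ENNReal.toReal_zero, jumpFun_eq_sum_filter, Finset.sum_eq_zero]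
    intro j hj
    grind
  · rw [eVariationOn.congr ((eqOn_jumpFun_filter_lt w x).mono Icc_subset_Iic_self),
      eVariationOn_jumpFun, ENNReal.toReal_ofReal (Finset.sum_nonneg fun _ _ => abs_nonneg _),
      jumpFun_eq_sum_filter]
    · grind
    · exact hinj.mono
        (Finset.coe_subset.2 ((Finset.filter_subset _ _).trans (Finset.filter_subset _ _)))

lemma posPartFun_jumpFun_add_const (hinj : InjOn a s) :
    posPartFun (fun x => jumpFun s a w x + C) c e
      = jumpFun (s.filter fun j => c ≤ a j ∧ a j < e) a (fun j => (|w j| + w j) / 2) := by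
  funext x
  rw [posPartFun, varFun_jumpFun_add_const _ _ _ _ hinj, clampOn_jumpFun_add_const,
    jumpFun_eq_sum_filter s a w c, ← add_assoc, add_sub_cancel_right]
  simp only [jumpFun, ← Finset.sum_add_distrib, Finset.sum_div]
  exact Finset.sum_congr rfl fun _ _ => by ring

lemma negPartFun_jumpFun_add_const (hinj : InjOn a s) :
    negPartFun (fun x => jumpFun s a w x + C) c e
      = jumpFun (s.filter fun j => c ≤ a j ∧ a j < e) a (fun j => (|w j| - w j) / 2) := by
  funext x
  rw [negPartFun, varFun_jumpFun_add_const _ _ _ _ hinj, clampOn_jumpFun_add_const,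
    jumpFun_eq_sum_filter s a w c, ← sub_sub, sub_add_cancel]
  simp only [jumpFun, ← Finset.sum_sub_distrib, Finset.sum_div]
  exact Finset.sum_congr rfl fun _ _ => by ring

end JumpFunJordan

section JumpFunMeasure

variable {ι : Type*} {s : Finset ι} {a u : ι → ℝ}

lemma monotone_jumpFun (hu : ∀ j ∈ s, 0 ≤ u j) : Monotone (jumpFun s a u) := fun x y hxy => by
  simp only [jumpFun_eq_sum_filter]
  exact Finset.sum_le_sum_of_subset_of_nonneg
    (Finset.monotone_filter_right s fun _ _ h => h.trans_le hxy)
    fun j hj _ => hu j (Finset.mem_of_mem_filter j hj)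

lemma rightLim_jumpFun (x : ℝ) :
    rightLim (jumpFun s a u) x = ∑ j ∈ s with a j ≤ x, u j := by
  rw [Finset.sum_filter]
  refine rightLim_eq_of_tendsto (tendsto_finsetSum _ fun j _ => tendsto_const_nhds.congr' ?_)
  by_cases h : a j ≤ x
  · filter_upwards [self_mem_nhdsWithin] with y (hy : x < y)
    rw [if_pos h, lcHeaviside_of_pos (by linarith), mul_one]
  · filter_upwards [Ioo_mem_nhdsGT (not_le.1 h)] with y hy
    rw [if_neg h, lcHeaviside_of_nonpos (by linarith [hy.2]), mul_zero]

lemma monoMeasure_jumpFun (hu : ∀ j ∈ s, 0 ≤ u j) :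
    monoMeasure (jumpFun s a u) = ∑ j ∈ s, ENNReal.ofReal (u j) • Measure.dirac (a j) := by
  have hm := monotone_jumpFun (a := a) hu
  rw [monoMeasure, dif_pos hm]
  refine Measure.ext_of_Ioc _ _ fun p q hpq => ?_
  have hincr : hm.stieltjesFunction q - hm.stieltjesFunction p
      = ∑ j ∈ s, if a j ∈ Ioc p q then u j else 0 := by
    simp only [Monotone.stieltjesFunction_eq, rightLim_jumpFun, Finset.sum_filter,
      ← Finset.sum_sub_distrib, mem_Ioc]
    exact Finset.sum_congr rfl fun j _ => by split_ifs <;> grind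
  rw [StieltjesFunction.measure_Ioc, hincr,
    ENNReal.ofReal_sum_of_nonneg fun j hj => by split_ifs <;> grind, Measure.finsetSum_apply]
  refine Finset.sum_congr rfl fun j _ => ?_
  rw [Measure.smul_apply, Measure.dirac_apply' _ measurableSet_Ioc, smul_eq_mul]
  split_ifs with h <;> simp [h]

lemma setIntegral_sum_dirac {c e : ℝ} (hu : ∀ j ∈ s, 0 ≤ u j) (hmem : ∀ j ∈ s, a j ∈ Ico c e)
    (φ : ℝ → ℝ) :
    ∫ x in Ico c e, φ x ∂(∑ j ∈ s, ENNReal.ofReal (u j) • Measure.dirac (a j))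
      = ∑ j ∈ s, u j * φ (a j) := by
  rw [← integral_indicator measurableSet_Ico, integral_finsetSum_measure
    fun j _ => (integrable_dirac (by simp)).smul_measure ENNReal.ofReal_ne_top]
  refine Finset.sum_congr rfl fun j hj => ?_
  rw [integral_smul_measure, integral_dirac, smul_eq_mul, ENNReal.toReal_ofReal (hu j hj),
    indicator_of_mem (hmem j hj)]

end JumpFunMeasure

section StepIntegral

variable {ι : Type*} {s : Finset ι} {a : ι → ℝ} {c e : ℝ}

lemma lsIntIcoR_jumpFun_add_const (hinj : InjOn a s) (w : ι → ℝ) (C : ℝ) (φ : ℝ → ℝ) :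
    lsIntIcoR (fun x => jumpFun s a w x + C) c e φ
      = ∑ j ∈ s with c ≤ a j ∧ a j < e, w j * φ (a j) := by
  have hpos : ∀ j ∈ s.filter (fun j => c ≤ a j ∧ a j < e), 0 ≤ (|w j| + w j) / 2 :=
    fun j _ => by linarith [neg_abs_le (w j)]
  have hneg : ∀ j ∈ s.filter (fun j => c ≤ a j ∧ a j < e), 0 ≤ (|w j| - w j) / 2 :=
    fun j _ => by linarith [le_abs_self (w j)]
  have hmem : ∀ j ∈ s.filter (fun j => c ≤ a j ∧ a j < e), a j ∈ Ico c e :=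
    fun j hj => (Finset.mem_filter.1 hj).2
  rw [lsIntIcoR, posPartFun_jumpFun_add_const _ _ _ _ hinj,
    negPartFun_jumpFun_add_const _ _ _ _ hinj, monoMeasure_jumpFun hpos, monoMeasure_jumpFun hneg,
    setIntegral_sum_dirac hpos hmem, setIntegral_sum_dirac hneg hmem, ← Finset.sum_sub_distrib]
  exact Finset.sum_congr rfl fun _ _ => by ring

lemma lsIntIcoC_sum_lcHeaviside_smul_add_const (hinj : InjOn a s) (z : ι → ℂ) (C : ℂ)
    (φ : ℝ → ℂ) :
    lsIntIcoC (fun x => ∑ j ∈ s, lcHeaviside (x - a j) • z j + C) c e φ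
      = ∑ j ∈ s with c ≤ a j ∧ a j < e, z j * φ (a j) := by
  have hre : (fun x => (∑ j ∈ s, lcHeaviside (x - a j) • z j + C).re)
      = fun x => jumpFun s a (fun j => (z j).re) x + C.re := funext fun x => by
    simp [jumpFun, Complex.re_sum, mul_comm]
  have him : (fun x => (∑ j ∈ s, lcHeaviside (x - a j) • z j + C).im)
      = fun x => jumpFun s a (fun j => (z j).im) x + C.im := funext fun x => by
    simp [jumpFun, Complex.im_sum, mul_comm]
  rw [lsIntIcoC, hre, him]
  simp only [lsIntIcoR_jumpFun_add_const hinj]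
  apply Complex.ext <;>
    simp [Complex.re_sum, Complex.im_sum, ← Finset.sum_sub_distrib, ← Finset.sum_add_distrib]

lemma lsIntIcoMM_sum_lcHeaviside_smul_add_const {d : ℕ} (hinj : InjOn a s)
    (M : ι → Matrix (Fin d) (Fin d) ℂ) (C : Matrix (Fin d) (Fin d) ℂ)
    (G : ℝ → Matrix (Fin d) (Fin d) ℂ) :
    lsIntIcoMM (fun x => ∑ l ∈ s, lcHeaviside (x - a l) • M l + C) c e G
      = ∑ l ∈ s with c ≤ a l ∧ a l < e, M l * G (a l) := by
  ext i k
  have hentry : ∀ j, (fun x => (∑ l ∈ s, lcHeaviside (x - a l) • M l + C) i j)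
      = fun x => ∑ l ∈ s, lcHeaviside (x - a l) • M l i j + C i j := fun j => funext fun x => by
    simp [Matrix.sum_apply]
  simp only [lsIntIcoMM, Matrix.of_apply, hentry, lsIntIcoC_sum_lcHeaviside_smul_add_const hinj,
    Matrix.sum_apply, Matrix.mul_apply]
  exact Finset.sum_comm

end StepIntegral

lemma eqOn_Ico_of_delay_recursion {ι R : Type*} [Fintype ι] [NonUnitalNonAssocSemiring R]
    {τ : ι → ℝ} {δ : ℝ} (hδ : 0 < δ) (hτδ : ∀ l, δ ≤ τ l) {A : ι → ℝ → R} {g Y Z : ℝ → R}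
    {α b : ℝ}
    (hY : ∀ t ∈ Ico α b, Y t = g t + ∑ l with α ≤ t - τ l, A l t * Y (t - τ l))
    (hZ : ∀ t ∈ Ico α b, Z t = g t + ∑ l with α ≤ t - τ l, A l t * Z (t - τ l)) :
    EqOn Y Z (Ico α b) := by
  have hsteps : ∀ n : ℕ, ∀ t ∈ Ico α b, t - α < n * δ → Y t = Z t := by
    intro n
    induction n with
    | zero => intro t ht h; simp only [Nat.cast_zero, zero_mul] at h; linarith [ht.1]
    | succ n ih =>
      intro t ht h
      rw [hY t ht, hZ t ht]
      refine congrArg _ (Finset.sum_congr rfl fun l hl => ?_)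
      have hl : α ≤ t - τ l := (Finset.mem_filter.1 hl).2
      rw [ih (t - τ l) ⟨hl, by linarith [hτδ l, ht.2]⟩ (by push_cast at h; linarith [hτδ l])]
  intro t ht
  obtain ⟨n, hn⟩ := exists_nat_gt ((t - α) / δ)
  exact hsteps n t ht (by rwa [div_lt_iff₀ hδ] at hn)

lemma fundamental_solution_eq_sum_filter {ι R : Type*} [Fintype ι] [NonAssocSemiring R]
    {τ : ι → ℝ} {D : ι → ℝ → R} {X : ℝ → ℝ → R}
    (hX0 : ∀ t α : ℝ, t < α → X t α = 0)
    (hXrec : ∀ t α : ℝ, α ≤ t → X t α = 1 + ∑ j, D j t * X (t - τ j) α) {t α : ℝ} (h : α ≤ t) :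
    X t α = 1 + ∑ l with α ≤ t - τ l, D l t * X (t - τ l) α := by
  rw [hXrec t α h, Finset.sum_filter_of_ne fun l _ hne => not_lt.1 fun hlt => hne ?_]
  rw [hX0 _ _ hlt, mul_zero]

section DelayKernel

variable {ι : Type*} [Fintype ι] {d : ℕ} {τ : ι → ℝ} {D : ι → ℝ → Matrix (Fin d) (Fin d) ℂ}

def delayKernel (τ : ι → ℝ) (D : ι → ℝ → Matrix (Fin d) (Fin d) ℂ) (t τ' : ℝ) :
    Matrix (Fin d) (Fin d) ℂ :=
  if τ' ≤ t then (∑ j, lcHeaviside (τ' - t + τ j) • D j t) - ∑ j, D j t else 0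

lemma delayKernel_eq (hτ : ∀ j, 0 < τ j) (t x : ℝ) :
    delayKernel τ D t x = ∑ j, lcHeaviside (x - (t - τ j)) • D j t - ∑ j, D j t := by
  rw [delayKernel]
  split_ifs with h
  · simp only [sub_sub_eq_add_sub, sub_add_eq_add_sub]
  · rw [Finset.sum_congr rfl fun j _ => by rw [lcHeaviside_of_pos (by linarith [hτ j]), one_smul],
      sub_self]

lemma neg_delayKernel_eq (hτ : ∀ j, 0 < τ j) (t α : ℝ) :
    -delayKernel τ D t α = ∑ j with α ≤ t - τ j, D j t := by
  simp only [delayKernel_eq hτ, lcHeaviside_sub, ite_smul, one_smul, zero_smul,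
    ← Finset.sum_filter, neg_sub, not_lt.symm]
  rw [← Finset.sum_filter_add_sum_filter_not Finset.univ (fun j => t - τ j < α)]
  abel

lemma resolvent_delayKernel_eq (hτ : ∀ j, 0 < τ j) (hinj : Injective τ) {a b : ℝ}
    {ρ : ℝ → ℝ → Matrix (Fin d) (Fin d) ℂ} (hρ : IsResolvent d a b (delayKernel τ D) ρ)
    {t α : ℝ} (ht : t ∈ Icc a b) (hα : α ∈ Icc a b) :
    ρ t α = ∑ l with α ≤ t - τ l, D l t * (1 + ρ (t - τ l) α) := by
  have hinj' : InjOn (fun l => t - τ l) (Finset.univ : Finset ι) :=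
    fun l _ m _ h => hinj (sub_right_injective h)
  have hk : delayKernel τ D t = fun x => ∑ l, lcHeaviside (x - (t - τ l)) • D l t + -∑ l, D l t :=
    funext fun x => (delayKernel_eq hτ t x).trans (sub_eq_add_neg _ _)
  rw [hρ.2 t ht α hα, neg_delayKernel_eq hτ, hk,
    lsIntIcoMM_sum_lcHeaviside_smul_add_const hinj',
    Finset.filter_congr fun l _ => and_iff_left (by linarith [hτ l] : t - τ l < t),
    ← Finset.sum_add_distrib]
  simp only [mul_add, mul_one]

end DelayKernel

theorem resolvent_equals_fundamental_solution_general
    (d N : ℕ)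
    (τ : Fin (N + 1) → ℝ) (hτpos : ∀ j, 0 < τ j) (hτmono : StrictMono τ)
    (D : Fin (N + 1) → ℝ → Matrix (Fin d) (Fin d) ℂ)
    (s : ℝ)
    -- the kernel of the difference-delay system
    (k : ℝ → ℝ → Matrix (Fin d) (Fin d) ℂ)
    (hk : k = fun t τ' => if τ' ≤ t then
      (∑ j, lcHeaviside (τ' - t + τ j) • D j t) - ∑ j, D j t else 0)
    -- its resolvent
    (ρ : ℝ → ℝ → Matrix (Fin d) (Fin d) ℂ)
    (hρ : IsResolvent d s (s + τ (Fin.last N)) k ρ)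
    -- the fundamental solution
    (X : ℝ → ℝ → Matrix (Fin d) (Fin d) ℂ)
    (hX0 : ∀ t α : ℝ, t < α → X t α = 0)
    (hXrec : ∀ t α : ℝ, α ≤ t → X t α = 1 + ∑ j, D j t * X (t - τ j) α) :
    ∀ t ∈ Ico s (s + τ (Fin.last N)), ∀ α ∈ Ico s (s + τ (Fin.last N)),
      (if 0 ≤ t - α then (1 : Matrix (Fin d) (Fin d) ℂ) else 0) + ρ t α = X t α := by
  subst hk
  intro t ht α hα
  rcases lt_or_ge t α with htα | hαt
  · rw [if_neg (by linarith), zero_add, hX0 t α htα]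
    exact hρ.1.2.1 t (Ico_subset_Icc_self ht) α (Ico_subset_Icc_self hα) htα.le
  rw [if_pos (sub_nonneg.2 hαt)]
  refine eqOn_Ico_of_delay_recursion (hτpos 0) (fun l => hτmono.monotone (Fin.zero_le l))
    (g := fun _ => 1) (Y := fun u => 1 + ρ u α) (fun u hu => ?_)
    (fun u hu => fundamental_solution_eq_sum_filter hX0 hXrec hu.1) ⟨hαt, ht.2⟩
  rw [resolvent_delayKernel_eq (D := D) hτpos hτmono.injective hρ
    ⟨hα.1.trans hu.1, hu.2.le⟩ (Ico_subset_Icc_self hα)]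

/-- **Identification of the resolvent with the fundamental solution** (end of the
proof of Theorem 1.1).

Let `k` be the Stieltjes–Volterra kernel of the difference-delay system on
`[s, s+τ_N] × [s, s+τ_N]` and `ρ` its resolvent. Then for all
`(t,α) ∈ [s, s+τ_N) × [s, s+τ_N)` one has `H(t-α) I_d + ρ(t,α) = X(t,α)`, where `H`
is the right-continuous Heaviside function and `X` is the fundamental solution. -/
theorem resolvent_equals_fundamental_solution
    (d N : ℕ) (hd : 0 < d)
    (τ : Fin (N + 1) → ℝ) (hτpos : ∀ j, 0 < τ j) (hτmono : StrictMono τ)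
    (D : Fin (N + 1) → ℝ → Matrix (Fin d) (Fin d) ℂ) (hD : ∀ j, Continuous (D j))
    (s : ℝ)
    -- the kernel of the difference-delay system
    (k : ℝ → ℝ → Matrix (Fin d) (Fin d) ℂ)
    (hk : k = fun t τ' => if τ' ≤ t then
      (∑ j, lcHeaviside (τ' - t + τ j) • D j t) - ∑ j, D j t else 0)
    -- its resolvent
    (ρ : ℝ → ℝ → Matrix (Fin d) (Fin d) ℂ)
    (hρ : IsResolvent d s (s + τ (Fin.last N)) k ρ)
    -- the fundamental solution
    (X : ℝ → ℝ → Matrix (Fin d) (Fin d) ℂ)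
    (hX0 : ∀ t α : ℝ, t < α → X t α = 0)
    (hXrec : ∀ t α : ℝ, α ≤ t → X t α = 1 + ∑ j, D j t * X (t - τ j) α) :
    ∀ t ∈ Ico s (s + τ (Fin.last N)), ∀ α ∈ Ico s (s + τ (Fin.last N)),
      (if 0 ≤ t - α then (1 : Matrix (Fin d) (Fin d) ℂ) else 0) + ρ t α = X t α :=
  resolvent_equals_fundamental_solution_general d N τ hτpos hτmono D s k hk ρ hρ X hX0 hXrec
end
end

section
/- Fix s ∈ ℝ. Let φ_k → φ uniformly on [−τ_N, 0] and, for each j, D_{j,k} → D_j uniformly on [s, s+τ_N] as k → ∞, where each φ_k is continuous and satisfies the compatibility condition φ_k(0) = Σ_{j=1}^N D_{j,k}(s) φ_k(−τ_j) and each D_{j,k} is continuous. Then the solutions y_k of the difference-delay systems with coefficients D_{j,k} and initial data φ_k converge uniformly on [s, s+τ_N] to the solution y with coefficients D_j and initial data φ. -/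
open Set Filter

set_option maxHeartbeats 2000000 in
/-- **Continuous dependence of the solution on the data.**

If `φ k → φ` uniformly on `[-τ_N, 0]` and `D k j → D j` uniformly on `[s, s+τ_N]`,
where the `φ k` are continuous and compatible with the coefficients `D k j` and the
`D k j` are continuous, then the solutions `y k` of the difference-delay systems with
coefficients `D k j` and initial data `φ k` converge uniformly on `[s, s+τ_N]` to the
solution `y` with coefficients `D j` and initial data `φ`. -/
theorem difference_delay_solutions_uniform_convergence
    (d N : ℕ) (hd : 0 < d)
    (τ : Fin (N + 1) → ℝ) (hτpos : ∀ j, 0 < τ j) (hτmono : StrictMono τ)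
    (s : ℝ)
    -- the limiting coefficients and data
    (D : Fin (N + 1) → ℝ → Matrix (Fin d) (Fin d) ℂ) (hD : ∀ j, Continuous (D j))
    (φ : ℝ → Fin d → ℂ) (hφcont : ContinuousOn φ (Icc (-(τ (Fin.last N))) 0))
    (hφcompat : φ 0 = ∑ j, (D j s).mulVec (φ (-(τ j))))
    -- the approximating coefficients and data
    (Dk : ℕ → Fin (N + 1) → ℝ → Matrix (Fin d) (Fin d) ℂ)
    (hDk : ∀ k j, Continuous (Dk k j))
    (φk : ℕ → ℝ → Fin d → ℂ)
    (hφkcont : ∀ k, ContinuousOn (φk k) (Icc (-(τ (Fin.last N))) 0))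
    (hφkcompat : ∀ k, φk k 0 = ∑ j, (Dk k j s).mulVec (φk k (-(τ j))))
    -- uniform convergence of the data
    (hφconv : TendstoUniformlyOn (fun k θ => φk k θ) φ atTop (Icc (-(τ (Fin.last N))) 0))
    (hDconv : ∀ j, TendstoUniformlyOn (fun k t => Dk k j t) (D j) atTop
      (Icc s (s + τ (Fin.last N))))
    -- the solutions
    (y : ℝ → Fin d → ℂ)
    (hy0 : ∀ θ ∈ Icc (-(τ (Fin.last N))) 0, y (s + θ) = φ θ)
    (hy : ∀ t, s < t → y t = ∑ j, (D j t).mulVec (y (t - τ j)))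
    (yk : ℕ → ℝ → Fin d → ℂ)
    (hyk0 : ∀ k, ∀ θ ∈ Icc (-(τ (Fin.last N))) 0, yk k (s + θ) = φk k θ)
    (hyk : ∀ k, ∀ t, s < t → yk k t = ∑ j, (Dk k j t).mulVec (yk k (t - τ j))) :
    TendstoUniformlyOn (fun k t => yk k t) y atTop (Icc s (s + τ (Fin.last N))) := by
  set T := τ (Fin.last N) with hTdef
  have hT : 0 < T := hτpos _
  set τ0 := τ 0 with hτ0def
  have hτ0 : 0 < τ0 := hτpos 0
  have hτle : ∀ j, τ j ≤ T := fun j => hτmono.monotone (Fin.le_last j)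
  have hτ0le : ∀ j, τ0 ≤ τ j := fun j => hτmono.monotone (Fin.zero_le j)
  -- values of y and yk on the initial interval
  have yval : ∀ t ∈ Icc (s - T) s, y t = φ (t - s) := by
    intro t ht
    have h1 : t - s ∈ Icc (-T) (0:ℝ) := ⟨by linarith [ht.1], by linarith [ht.2]⟩
    have h2 := hy0 (t - s) h1
    have e : s + (t - s) = t := by ring
    rwa [e] at h2
  have ykval : ∀ k, ∀ t ∈ Icc (s - T) s, yk k t = φk k (t - s) := by
    intro k t ht
    have h1 : t - s ∈ Icc (-T) (0:ℝ) := ⟨by linarith [ht.1], by linarith [ht.2]⟩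
    have h2 := hyk0 k (t - s) h1
    have e : s + (t - s) = t := by ring
    rwa [e] at h2
  -- bound M on the entries of D on [s, s+T]
  have hDb : ∀ p : Fin (N+1) × Fin d × Fin d, ∃ c, ∀ t ∈ Icc s (s + T),
      ‖D p.1 t p.2.1 p.2.2‖ ≤ c := by
    intro p
    exact isCompact_Icc.exists_bound_of_continuousOn
      ((continuous_apply p.2.2).comp ((continuous_apply p.2.1).comp (hD p.1))).continuousOn
  choose C hC using hDb
  set M : ℝ := 1 + ∑ p : Fin (N+1) × Fin d × Fin d, max 0 (C p) with hMdef
  have hM1 : 1 ≤ M := by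
    have : (0:ℝ) ≤ ∑ p : Fin (N+1) × Fin d × Fin d, max 0 (C p) :=
      Finset.sum_nonneg fun p _ => le_max_left 0 (C p)
    simp [hMdef]; linarith
  have hMD : ∀ j, ∀ t ∈ Icc s (s + T), ∀ i l, ‖D j t i l‖ ≤ M := by
    intro j t ht i l
    have h1 : ‖D j t i l‖ ≤ C (j, i, l) := hC (j, i, l) t ht
    have h2 : C (j, i, l) ≤ max 0 (C (j, i, l)) := le_max_right _ _
    have h3 : max 0 (C (j, i, l)) ≤ ∑ p : Fin (N+1) × Fin d × Fin d, max 0 (C p) :=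
      Finset.single_le_sum (fun p _ => le_max_left 0 (C p)) (Finset.mem_univ (j, i, l))
    simp only [hMdef]; linarith
  -- bound C0 on φ
  obtain ⟨C0', hC0'⟩ := isCompact_Icc.exists_bound_of_continuousOn hφcont
  set C0 : ℝ := max C0' 0 with hC0def
  have hC0nn : 0 ≤ C0 := le_max_right _ _
  have hC0 : ∀ θ ∈ Icc (-T) 0, ‖φ θ‖ ≤ C0 := fun θ hθ => (hC0' θ hθ).trans (le_max_left _ _)
  set K : ℝ := ((N:ℝ) + 1) * d with hKdef
  have hK : 0 < K := by positivity
  -- boundedness of y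
  have hBy : ∀ n : ℕ, ∀ t ∈ Icc (s - T) (s + T), t ≤ s + n * τ0 →
      ‖y t‖ ≤ C0 * (K * M + 1) ^ n := by
    intro n
    induction n with
    | zero =>
      intro t ht hts
      simp only [Nat.cast_zero, zero_mul, add_zero] at hts
      rw [yval t ⟨ht.1, hts⟩, pow_zero, mul_one]
      exact hC0 _ ⟨by linarith [ht.1], by linarith⟩
    | succ n ih =>
      intro t ht hts
      have hd1 : (1:ℝ) ≤ (d:ℝ) := by exact_mod_cast hd
      have hN0 : (0:ℝ) ≤ (N:ℝ) := Nat.cast_nonneg N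
      have hKM1 : (1:ℝ) ≤ K * M := by nlinarith
      have hpow : (1:ℝ) ≤ (K * M + 1) ^ (n+1) := one_le_pow₀ (by linarith)
      rcases le_or_gt t s with hle | hlt
      · rw [yval t ⟨ht.1, hle⟩]
        calc ‖φ (t - s)‖ ≤ C0 := hC0 _ ⟨by linarith [ht.1], by linarith⟩
          _ ≤ C0 * (K * M + 1) ^ (n+1) := le_mul_of_one_le_right hC0nn hpow
      · rw [hy t hlt]
        have hpn : (0:ℝ) ≤ (K * M + 1) ^ n := by positivity
        refine (pi_norm_le_iff_of_nonneg (by positivity)).2 fun i => ?_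
        have expand : (∑ j, (D j t).mulVec (y (t - τ j))) i
            = ∑ j, ∑ l, D j t i l * y (t - τ j) l := by
          simp [Finset.sum_apply, Matrix.mulVec, dotProduct]
        rw [expand]
        have hterm : ∀ j : Fin (N+1), ‖∑ l, D j t i l * y (t - τ j) l‖
            ≤ (d : ℝ) * (M * (C0 * (K * M + 1) ^ n)) := by
          intro j
          have hmem : t - τ j ∈ Icc (s - T) (s + T) :=
            ⟨by linarith [ht.1, hτle j, hτpos j], by linarith [ht.2, hτpos j]⟩
          have hts' : t - τ j ≤ s + n * τ0 := by
            have := hτ0le j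
            push_cast at hts ⊢
            linarith
          have hyb := ih (t - τ j) hmem hts'
          calc ‖∑ l, D j t i l * y (t - τ j) l‖
              ≤ ∑ l, ‖D j t i l * y (t - τ j) l‖ := norm_sum_le _ _
            _ ≤ ∑ _l : Fin d, M * (C0 * (K * M + 1) ^ n) := by
                refine Finset.sum_le_sum fun l _ => ?_
                rw [norm_mul]
                have h1 : ‖D j t i l‖ ≤ M := hMD j t ⟨le_of_lt hlt, ht.2⟩ i l
                have h2 : ‖y (t - τ j) l‖ ≤ C0 * (K * M + 1) ^ n :=
                  (norm_le_pi_norm _ l).trans hyb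
                have := norm_nonneg (D j t i l)
                have := norm_nonneg (y (t - τ j) l)
                nlinarith
            _ = (d : ℝ) * (M * (C0 * (K * M + 1) ^ n)) := by
                simp [mul_comm]
        calc ‖∑ j, ∑ l, D j t i l * y (t - τ j) l‖
            ≤ ∑ j, ‖∑ l, D j t i l * y (t - τ j) l‖ := norm_sum_le _ _
          _ ≤ ∑ _j : Fin (N+1), (d : ℝ) * (M * (C0 * (K * M + 1) ^ n)) :=
              Finset.sum_le_sum fun j _ => hterm j
          _ = K * M * (C0 * (K * M + 1) ^ n) := by
              simp [hKdef]; push_cast; ring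
          _ ≤ C0 * (K * M + 1) ^ (n+1) := by
              rw [pow_succ]
              nlinarith
  -- global bound B on y
  obtain ⟨n0, hn0⟩ : ∃ n0 : ℕ, T ≤ n0 * τ0 := by
    obtain ⟨n0, hn0⟩ := exists_nat_ge (T / τ0)
    exact ⟨n0, by rw [div_le_iff₀ hτ0] at hn0; linarith⟩
  set B : ℝ := C0 * (K * M + 1) ^ n0 with hBdef
  have hKM0 : (0:ℝ) < K * M := mul_pos hK (lt_of_lt_of_le one_pos hM1)
  have hBnn : 0 ≤ B := mul_nonneg hC0nn (pow_nonneg (by linarith) _)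
  have hyB : ∀ t ∈ Icc (s - T) (s + T), ‖y t‖ ≤ B :=
    fun t ht => hBy n0 t ht (by linarith [ht.2])
  -- entrywise uniform convergence of the coefficients
  have hDconv' : ∀ ε > 0, ∀ᶠ k in atTop, ∀ j, ∀ t ∈ Icc s (s + T), ∀ i l,
      ‖Dk k j t i l - D j t i l‖ < ε := by
    intro ε hε
    refine eventually_all.2 fun j => ?_
    have h2 := (@Metric.tendstoUniformlyOn_iff (Fin d → Fin d → ℂ) ℝ ℕ _
      (fun k t => Dk k j t) (fun t => D j t) atTop (Icc s (s + T))).mp (hDconv j) ε hε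
    filter_upwards [h2] with k hk t ht i l
    calc ‖Dk k j t i l - D j t i l‖ = dist (D j t i l) (Dk k j t i l) := by
          rw [dist_comm, dist_eq_norm]
      _ ≤ dist (D j t i) (Dk k j t i) := dist_le_pi_dist _ _ l
      _ ≤ @dist (Fin d → Fin d → ℂ) _ (D j t) (Dk k j t) := dist_le_pi_dist _ _ i
      _ < ε := hk t ht
  have hφconv' : ∀ ε > 0, ∀ᶠ k in atTop, ∀ θ ∈ Icc (-T) 0,
      dist (φk k θ) (φ θ) < ε := by
    intro ε hε
    filter_upwards [Metric.tendstoUniformlyOn_iff.mp hφconv ε hε] with k hk θ hθ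
    rw [dist_comm]; exact hk θ hθ
  -- eventual bound on Dk entries
  have hMDk : ∀ᶠ k in atTop, ∀ j, ∀ t ∈ Icc s (s + T), ∀ i l,
      ‖Dk k j t i l‖ ≤ M + 1 := by
    filter_upwards [hDconv' 1 one_pos] with k hk j t ht i l
    calc ‖Dk k j t i l‖ ≤ ‖Dk k j t i l - D j t i l‖ + ‖D j t i l‖ := by
          simpa using norm_add_le (Dk k j t i l - D j t i l) (D j t i l)
      _ ≤ 1 + M := add_le_add (le_of_lt (hk j t ht i l)) (hMD j t ht i l)
      _ = M + 1 := by ring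
  -- the main induction
  have key : ∀ n : ℕ, ∀ ε > 0, ∀ᶠ k in atTop, ∀ t ∈ Icc (s - T) (s + T),
      t ≤ s + n * τ0 → dist (yk k t) (y t) ≤ ε := by
    intro n
    induction n with
    | zero =>
      intro ε hε
      filter_upwards [hφconv' ε hε] with k hk t ht hts
      simp only [Nat.cast_zero, zero_mul, add_zero] at hts
      rw [ykval k t ⟨ht.1, hts⟩, yval t ⟨ht.1, hts⟩]
      exact le_of_lt (hk (t - s) ⟨by linarith [ht.1], by linarith⟩)
    | succ n ih =>
      intro ε hε
      have hM2 : (0:ℝ) < M + 1 := by linarith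
      have hB1 : (0:ℝ) < B + 1 := by linarith
      set ε' : ℝ := ε / (2 * K * (M + 1)) with hε'def
      set η : ℝ := ε / (2 * K * (B + 1)) with hηdef
      have hε' : 0 < ε' := div_pos hε (mul_pos (mul_pos two_pos hK) hM2)
      have hη : 0 < η := div_pos hε (mul_pos (mul_pos two_pos hK) hB1)
      filter_upwards [ih ε' hε', hDconv' η hη, hMDk, hφconv' ε hε]
        with k hk1 hk2 hk3 hk4 t ht hts
      rcases le_or_gt t s with hle | hlt
      · rw [ykval k t ⟨ht.1, hle⟩, yval t ⟨ht.1, hle⟩]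
        exact le_of_lt (hk4 (t - s) ⟨by linarith [ht.1], by linarith⟩)
      · rw [hyk k t hlt, hy t hlt]
        refine (dist_pi_le_iff (le_of_lt hε)).2 fun i => ?_
        rw [dist_eq_norm]
        have expand : (∑ j, (Dk k j t).mulVec (yk k (t - τ j))) i
            - (∑ j, (D j t).mulVec (y (t - τ j))) i
            = ∑ j, ∑ l, (Dk k j t i l * yk k (t - τ j) l - D j t i l * y (t - τ j) l) := by
          simp [Finset.sum_apply, Matrix.mulVec, dotProduct, ← Finset.sum_sub_distrib]
        rw [expand]
        have htmem : t ∈ Icc s (s + T) := ⟨le_of_lt hlt, ht.2⟩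
        have hterm : ∀ j : Fin (N+1),
            ‖∑ l, (Dk k j t i l * yk k (t - τ j) l - D j t i l * y (t - τ j) l)‖
            ≤ (d : ℝ) * ((M + 1) * ε' + η * B) := by
          intro j
          have hmem : t - τ j ∈ Icc (s - T) (s + T) :=
            ⟨by linarith [ht.1, hτle j, hτpos j], by linarith [ht.2, hτpos j]⟩
          have hts' : t - τ j ≤ s + n * τ0 := by
            have h1 := hτ0le j
            have h2 : ((n:ℝ) + 1) * τ0 = n * τ0 + τ0 := by ring
            push_cast at hts
            linarith
          have hykd := hk1 (t - τ j) hmem hts'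
          calc ‖∑ l, (Dk k j t i l * yk k (t - τ j) l - D j t i l * y (t - τ j) l)‖
              ≤ ∑ l, ‖Dk k j t i l * yk k (t - τ j) l - D j t i l * y (t - τ j) l‖ :=
                norm_sum_le _ _
            _ ≤ ∑ _l : Fin d, ((M + 1) * ε' + η * B) := by
                refine Finset.sum_le_sum fun l _ => ?_
                have e : Dk k j t i l * yk k (t - τ j) l - D j t i l * y (t - τ j) l
                    = Dk k j t i l * (yk k (t - τ j) l - y (t - τ j) l)
                      + (Dk k j t i l - D j t i l) * y (t - τ j) l := by ring
                rw [e]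
                have h1 : ‖Dk k j t i l‖ ≤ M + 1 := hk3 j t htmem i l
                have h2 : ‖yk k (t - τ j) l - y (t - τ j) l‖ ≤ ε' := by
                  rw [← dist_eq_norm]
                  exact (dist_le_pi_dist _ _ l).trans hykd
                have h3 : ‖Dk k j t i l - D j t i l‖ ≤ η := le_of_lt (hk2 j t htmem i l)
                have h4 : ‖y (t - τ j) l‖ ≤ B := (norm_le_pi_norm _ l).trans (hyB _ hmem)
                calc ‖Dk k j t i l * (yk k (t - τ j) l - y (t - τ j) l)
                      + (Dk k j t i l - D j t i l) * y (t - τ j) l‖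
                    ≤ ‖Dk k j t i l * (yk k (t - τ j) l - y (t - τ j) l)‖
                      + ‖(Dk k j t i l - D j t i l) * y (t - τ j) l‖ := norm_add_le _ _
                  _ = ‖Dk k j t i l‖ * ‖yk k (t - τ j) l - y (t - τ j) l‖
                      + ‖Dk k j t i l - D j t i l‖ * ‖y (t - τ j) l‖ := by
                        rw [norm_mul, norm_mul]
                  _ ≤ (M + 1) * ε' + η * B := by
                        have := norm_nonneg (Dk k j t i l)
                        have := norm_nonneg (yk k (t - τ j) l - y (t - τ j) l)
                        have := norm_nonneg (Dk k j t i l - D j t i l)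
                        have := norm_nonneg (y (t - τ j) l)
                        nlinarith
            _ = (d : ℝ) * ((M + 1) * ε' + η * B) := by simp [mul_add]
        calc ‖∑ j, ∑ l, (Dk k j t i l * yk k (t - τ j) l - D j t i l * y (t - τ j) l)‖
            ≤ ∑ j, ‖∑ l, (Dk k j t i l * yk k (t - τ j) l - D j t i l * y (t - τ j) l)‖ :=
              norm_sum_le _ _
          _ ≤ ∑ _j : Fin (N+1), (d : ℝ) * ((M + 1) * ε' + η * B) :=
              Finset.sum_le_sum fun j _ => hterm j
          _ = K * ((M + 1) * ε' + η * B) := by simp [hKdef]; push_cast; ring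
          _ ≤ ε := by
              have e1 : K * ((M + 1) * ε') = ε / 2 := by
                rw [hε'def]; field_simp
              have e2 : K * η = ε / (2 * (B + 1)) := by
                rw [hηdef]; field_simp
              have h3 : K * (η * B) ≤ ε / 2 := by
                have : K * (η * B) = (ε / (2 * (B + 1))) * B := by rw [← e2]; ring
                rw [this]
                rw [div_mul_eq_mul_div, div_le_iff₀ (by linarith)]
                nlinarith
              nlinarith [hK, hM2]
  -- conclusion
  rw [Metric.tendstoUniformlyOn_iff]
  intro ε hε
  filter_upwards [key n0 (ε/2) (by linarith)] with k hk t ht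
  have h1 : t ∈ Icc (s - T) (s + T) := ⟨by linarith [ht.1], ht.2⟩
  have h2 : t ≤ s + n0 * τ0 := by linarith [ht.2]
  calc dist (y t) (yk k t) = dist (yk k t) (y t) := dist_comm _ _
    _ ≤ ε / 2 := hk t h1 h2
    _ < ε := by linarith
end
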